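/- Let n ≥ 3 with 3 dividing n, and let G be the simple graph whose vertex set is {u_k : k ∈ ZMod n} ∪ {v_k : k ∈ ZMod n}, whose edges are u_k–u_{k+1} and v_k–v_{k+1} for all k ∈ ZMod n (two disjoint n-cycles), together with a set R of additional 'radial' edges such that every edge of R joins u_k to v_k or joins u_k to v_{k+1} for some k (indices mod n), and no two edges of R share an endpoint. Then G admits a proper 4-total coloring in which all edges of R receive one common color. -/

import Mathlib

/-- A proper total coloring of `G`: `cv` colors the vertices, `ce` colors the edges
(as unordered pairs); adjacent vertices get different colors, an edge gets a color
different from both of its endpoints, and edges sharing an endpoint get different colors. -/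
def IsTotalColoring {V C : Type*} (G : SimpleGraph V) (cv : V → C) (ce : Sym2 V → C) : Prop :=
  (∀ ⦃u v : V⦄, G.Adj u v → cv u ≠ cv v) ∧
  (∀ ⦃u v : V⦄, G.Adj u v → ce s(u, v) ≠ cv u) ∧
  (∀ ⦃u v w : V⦄, G.Adj u v → G.Adj u w → v ≠ w → ce s(u, v) ≠ ce s(u, w))

/-- Two disjoint `n`-cycles (on `Sum.inl` and `Sum.inr` copies of `ZMod n`)
together with radial edges `u_k — v_m` for `(k, m) ∈ R`. -/
def twoLayerGraph (n : ℕ) (R : Set (ZMod n × ZMod n)) :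
    SimpleGraph (ZMod n ⊕ ZMod n) :=
  SimpleGraph.fromRel (fun a b =>
    match a, b with
    | Sum.inl x, Sum.inl y => y = x + 1
    | Sum.inr x, Sum.inr y => y = x + 1
    | Sum.inl x, Sum.inr y => (x, y) ∈ R
    | Sum.inr _, Sum.inl _ => False)

/-!
Reduce the indices modulo 3 (possible since `3 ∣ n`) and color `u_k` by `k` and `v_k` by `k + 1`.
Then the two ends of every cycle edge get distinct residues and the edge itself gets the third
residue, while the radial edges, forming a matching, all get the fourth color.
-/

theorem IsTotalColoring.comp_injective {V C D : Type*} {G : SimpleGraph V} {cv : V → C}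
    {ce : Sym2 V → C} (h : IsTotalColoring G cv ce) {f : C → D} (hf : f.Injective) :
    IsTotalColoring G (f ∘ cv) (f ∘ ce) :=
  ⟨fun _ _ huv => hf.ne (h.1 huv), fun _ _ huv => hf.ne (h.2.1 huv),
    fun _ _ _ huv huw hvw => hf.ne (h.2.2 huv huw hvw)⟩

namespace ZMod

theorem neg_add_ne_left {a b : ZMod 3} (h : a ≠ b) : -(a + b) ≠ a := by
  revert a b
  decide

theorem add_one_ne_self (a : ZMod 3) : a + 1 ≠ a := by
  revert a
  decide

theorem add_one_add_one_ne_self (a : ZMod 3) : a + 1 + 1 ≠ a := by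
  revert a
  decide

end ZMod

section ThirdColor

variable {V : Type*}

/-- For distinct `a b : ZMod 3`, `-(a + b)` is the third residue, as `0 + 1 + 2 = 0`. -/
def thirdColor (κ : V → ZMod 3) : Sym2 V → ZMod 3 :=
  Sym2.lift ⟨fun a b => -(κ a + κ b), fun a b => by simp only [add_comm]⟩

open Classical in
noncomputable def thirdColorOrNone (H : SimpleGraph V) (κ : V → ZMod 3) (e : Sym2 V) :
    Option (ZMod 3) :=
  if e ∈ H.edgeSet then some (thirdColor κ e) else none

theorem isTotalColoring_thirdColorOrNone {G H : SimpleGraph V} {κ : V → ZMod 3}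
    (hκ : ∀ ⦃u v⦄, G.Adj u v → κ u ≠ κ v)
    (hH : ∀ ⦃u v w⦄, H.Adj u v → H.Adj u w → v ≠ w → κ v ≠ κ w)
    (hM : ∀ ⦃u v w⦄, G.Adj u v → G.Adj u w → ¬H.Adj u v → ¬H.Adj u w → v = w) :
    IsTotalColoring G (some ∘ κ) (thirdColorOrNone H κ) := by
  refine ⟨fun u v huv => Option.some_injective _ |>.ne (hκ huv), fun u v huv => ?_,
    fun u v w huv huw hvw => ?_⟩
  · by_cases hv : H.Adj u v
    · simp only [thirdColorOrNone, thirdColor, SimpleGraph.mem_edgeSet, hv, if_true, Sym2.lift_mk,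
        Function.comp_apply, ne_eq, Option.some.injEq]
      exact ZMod.neg_add_ne_left (hκ huv)
    · simp [thirdColorOrNone, hv]
  · by_cases hv : H.Adj u v <;> by_cases hw : H.Adj u w
    · simpa [thirdColorOrNone, thirdColor, hv, hw] using hH hv hw hvw
    · simp [thirdColorOrNone, hv, hw]
    · simp [thirdColorOrNone, hv, hw]
    · exact absurd (hM huv huw hv hw) hvw

end ThirdColor

section TwoLayer

variable {n : ℕ}

@[simp]
theorem twoLayerGraph_adj_inl_inl {R : Set (ZMod n × ZMod n)} {x y : ZMod n} :
    (twoLayerGraph n R).Adj (.inl x) (.inl y) ↔ x ≠ y ∧ (y = x + 1 ∨ x = y + 1) := by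
  simp [twoLayerGraph]

@[simp]
theorem twoLayerGraph_adj_inr_inr {R : Set (ZMod n × ZMod n)} {x y : ZMod n} :
    (twoLayerGraph n R).Adj (.inr x) (.inr y) ↔ x ≠ y ∧ (y = x + 1 ∨ x = y + 1) := by
  simp [twoLayerGraph]

@[simp]
theorem twoLayerGraph_adj_inl_inr {R : Set (ZMod n × ZMod n)} {x m : ZMod n} :
    (twoLayerGraph n R).Adj (.inl x) (.inr m) ↔ (x, m) ∈ R := by
  simp [twoLayerGraph]

@[simp]
theorem twoLayerGraph_adj_inr_inl {R : Set (ZMod n × ZMod n)} {x m : ZMod n} :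
    (twoLayerGraph n R).Adj (.inr m) (.inl x) ↔ (x, m) ∈ R := by
  simp [twoLayerGraph]

variable (h3 : 3 ∣ n)

def layerColor : ZMod n ⊕ ZMod n → ZMod 3 :=
  Sum.elim (ZMod.castHom h3 (ZMod 3)) (fun x => ZMod.castHom h3 (ZMod 3) x + 1)

theorem castHom_ne_of_cycle_adj {x y : ZMod n} (h : y = x + 1 ∨ x = y + 1) :
    ZMod.castHom h3 (ZMod 3) x ≠ ZMod.castHom h3 (ZMod 3) y := by
  rcases h with rfl | rfl <;> simp only [map_add, map_one]
  · exact (ZMod.add_one_ne_self _).symm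
  · exact ZMod.add_one_ne_self _

theorem castHom_ne_of_common_cycle_nbr {x y z : ZMod n} (hy : y = x + 1 ∨ x = y + 1)
    (hz : z = x + 1 ∨ x = z + 1) (hyz : y ≠ z) :
    ZMod.castHom h3 (ZMod 3) y ≠ ZMod.castHom h3 (ZMod 3) z := by
  rcases hy with rfl | rfl <;> rcases hz with rfl | h
  · exact absurd rfl hyz
  · subst h; simpa only [map_add, map_one] using ZMod.add_one_add_one_ne_self _
  · simpa only [map_add, map_one] using (ZMod.add_one_add_one_ne_self _).symm
  · exact absurd (add_right_cancel h) hyz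

theorem layerColor_ne_of_adj {R : Set (ZMod n × ZMod n)}
    (hR : ∀ p ∈ R, p.2 = p.1 ∨ p.2 = p.1 + 1) ⦃a b : ZMod n ⊕ ZMod n⦄
    (hab : (twoLayerGraph n R).Adj a b) : layerColor h3 a ≠ layerColor h3 b := by
  have radial {x m : ZMod n} (hxm : (x, m) ∈ R) :
      ZMod.castHom h3 (ZMod 3) x ≠ ZMod.castHom h3 (ZMod 3) m + 1 := by
    rcases hR _ hxm with h | h <;> dsimp only at h <;> subst h
    · exact (ZMod.add_one_ne_self _).symm
    · simpa only [map_add, map_one] using (ZMod.add_one_add_one_ne_self _).symm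
  rcases a with x | x <;> rcases b with y | y <;> simp only [twoLayerGraph_adj_inl_inl,
    twoLayerGraph_adj_inr_inr, twoLayerGraph_adj_inl_inr, twoLayerGraph_adj_inr_inl] at hab
  · exact castHom_ne_of_cycle_adj h3 hab.2
  · exact radial hab
  · exact (radial hab).symm
  · simpa [layerColor] using castHom_ne_of_cycle_adj h3 hab.2

theorem layerColor_ne_of_common_cycle_nbr ⦃a b c : ZMod n ⊕ ZMod n⦄
    (hb : (twoLayerGraph n ∅).Adj a b) (hc : (twoLayerGraph n ∅).Adj a c) (hbc : b ≠ c) :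
    layerColor h3 b ≠ layerColor h3 c := by
  rcases a with x | x <;> rcases b with y | y <;> rcases c with z | z <;>
    simp only [twoLayerGraph_adj_inl_inl, twoLayerGraph_adj_inr_inr, twoLayerGraph_adj_inl_inr,
      twoLayerGraph_adj_inr_inl, Set.mem_empty_iff_false] at hb hc
  · exact castHom_ne_of_common_cycle_nbr h3 hb.2 hc.2 (fun h => hbc (h ▸ rfl))
  · simpa [layerColor] using
      castHom_ne_of_common_cycle_nbr h3 hb.2 hc.2 (fun h => hbc (h ▸ rfl))

theorem eq_of_radial_adj_of_radial_adj {R : Set (ZMod n × ZMod n)}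
    (hMatching : ∀ p ∈ R, ∀ q ∈ R, p ≠ q → p.1 ≠ q.1 ∧ p.2 ≠ q.2) ⦃a b c : ZMod n ⊕ ZMod n⦄
    (hb : (twoLayerGraph n R).Adj a b) (hc : (twoLayerGraph n R).Adj a c)
    (hb' : ¬(twoLayerGraph n ∅).Adj a b) (hc' : ¬(twoLayerGraph n ∅).Adj a c) : b = c := by
  have same_fst {p q : ZMod n × ZMod n} (hp : p ∈ R) (hq : q ∈ R) (h : p.1 = q.1) : p = q :=
    by_contra fun hpq => (hMatching p hp q hq hpq).1 h
  have same_snd {p q : ZMod n × ZMod n} (hp : p ∈ R) (hq : q ∈ R) (h : p.2 = q.2) : p = q :=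
    by_contra fun hpq => (hMatching p hp q hq hpq).2 h
  rcases a with x | x <;> rcases b with y | y <;> rcases c with z | z <;>
    simp only [twoLayerGraph_adj_inl_inl, twoLayerGraph_adj_inr_inr, twoLayerGraph_adj_inl_inr,
      twoLayerGraph_adj_inr_inl] at hb hc hb' hc' <;> try contradiction
  · exact congrArg (Sum.inr ∘ Prod.snd) (same_fst hb hc rfl)
  · exact congrArg (Sum.inl ∘ Prod.fst) (same_snd hb hc rfl)

end TwoLayer

theorem twoLayer_four_total_coloring_radial_monochromatic_general (n : ℕ) (h3 : 3 ∣ n)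
    (R : Set (ZMod n × ZMod n))
    (hR : ∀ p ∈ R, p.2 = p.1 ∨ p.2 = p.1 + 1)
    (hMatching : ∀ p ∈ R, ∀ q ∈ R, p ≠ q → p.1 ≠ q.1 ∧ p.2 ≠ q.2) :
    ∃ (cv : ZMod n ⊕ ZMod n → Fin 4) (ce : Sym2 (ZMod n ⊕ ZMod n) → Fin 4) (t : Fin 4),
      IsTotalColoring (twoLayerGraph n R) cv ce ∧
      ∀ p ∈ R, ce s(Sum.inl p.1, Sum.inr p.2) = t := by
  have hcol : IsTotalColoring (twoLayerGraph n R) (some ∘ layerColor h3)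
      (thirdColorOrNone (twoLayerGraph n ∅) (layerColor h3)) :=
    isTotalColoring_thirdColorOrNone (layerColor_ne_of_adj h3 hR)
      (layerColor_ne_of_common_cycle_nbr h3) (eq_of_radial_adj_of_radial_adj hMatching)
  exact ⟨_, _, (finSuccEquiv 3).symm none, hcol.comp_injective (finSuccEquiv 3).symm.injective,
    fun p _ => congrArg (finSuccEquiv 3).symm (if_neg (by simp))⟩

theorem twoLayer_four_total_coloring_radial_monochromatic (n : ℕ) (hn : 3 ≤ n) (h3 : 3 ∣ n)
    (R : Set (ZMod n × ZMod n))
    (hR : ∀ p ∈ R, p.2 = p.1 ∨ p.2 = p.1 + 1)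
    (hMatching : ∀ p ∈ R, ∀ q ∈ R, p ≠ q → p.1 ≠ q.1 ∧ p.2 ≠ q.2) :
    ∃ (cv : ZMod n ⊕ ZMod n → Fin 4) (ce : Sym2 (ZMod n ⊕ ZMod n) → Fin 4) (t : Fin 4),
      IsTotalColoring (twoLayerGraph n R) cv ce ∧
      ∀ p ∈ R, ce s(Sum.inl p.1, Sum.inr p.2) = t :=
  twoLayer_four_total_coloring_radial_monochromatic_general n h3 R hR hMatching
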